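/- arXiv:2505.12211 — 7 statements merged into one kernel-verified Lean document; each statement's English description precedes it below -/
import Mathlib

section
/- (Theorem 2) Let Q_{β*} be the fixed point of the support-constrained Bellman optimality operator T_Supp, let π, β : S → A be deterministic policies, and set ε_π = max_s dist(π(s), β(s)) and ε_P = max_{s,s'} |P(s'|s,π(s)) − P(s'|s,β(s))|. Then for every state s, |Q_{β*}(s, π(s)) − Q_{β*}(s, β(s))| ≤ ℓ · ε_π + γ · (|S| · r_max / (1 − γ)) · ε_P. -/
open Finset

/-- Sup norm of a Q-function on a finite nonempty state-action space. -/
noncomputable def supNorm {S A : Type*} [Fintype S] [Fintype A] [Nonempty S] [Nonempty A]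
    (Q : S → A → ℝ) : ℝ :=
  Finset.univ.sup' Finset.univ_nonempty (fun p : S × A => |Q p.1 p.2|)

/-- Support-constrained Bellman optimality operator. -/
noncomputable def TSupp {S A : Type*} [Fintype S]
    (P : S → A → S → ℝ) (r : S → A → ℝ) (γ : ℝ)
    (Supp : S → Finset A) (hSupp : ∀ s, (Supp s).Nonempty)
    (Q : S → A → ℝ) : S → A → ℝ :=
  fun s a => r s a + γ * ∑ s', P s a s' * (Supp s').sup' (hSupp s') (fun a' => Q s' a')

/-- Imagined value under the empirical model. -/
noncomputable def yImg {S A : Type*} [Fintype S]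
    (Phat : S → A → S → ℝ) (rhat : S → A → ℝ) (γ : ℝ) (π : S → A)
    (Q : S → A → ℝ) : S → A → ℝ :=
  fun s a => rhat s a + γ * ∑ s', Phat s a s' * Q s' (π s')

/-- Limitation value: maximum behavior value. -/
noncomputable def yLmt {S A : Type*}
    (Supp : S → Finset A) (hSupp : ∀ s, (Supp s).Nonempty)
    (Q : S → A → ℝ) : S → ℝ :=
  fun s => (Supp s).sup' (hSupp s) (fun ahat => Q s ahat)

/-- Imagination-Limited Bellman operator. -/
noncomputable def TILB {S A : Type*} [Fintype S] [DecidableEq A]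
    (P : S → A → S → ℝ) (r : S → A → ℝ) (γ : ℝ)
    (Supp : S → Finset A) (hSupp : ∀ s, (Supp s).Nonempty)
    (π : S → A) (Phat : S → A → S → ℝ) (rhat : S → A → ℝ) (δ : ℝ)
    (Q : S → A → ℝ) : S → A → ℝ :=
  fun s a =>
    if a ∈ Supp s then r s a + γ * ∑ s', P s a s' * Q s' (π s')
    else min (yImg Phat rhat γ π Q s a) (yLmt Supp hSupp Q s) + δ

theorem optimality_value_gap
    {S A : Type*} [Fintype S] [Fintype A] [Nonempty S] [Nonempty A] [DecidableEq A]
    (P : S → A → S → ℝ) (hP0 : ∀ s a s', 0 ≤ P s a s') (hP1 : ∀ s a, ∑ s', P s a s' = 1)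
    (r : S → A → ℝ) (rmax : ℝ) (hrmax : 0 ≤ rmax) (hr : ∀ s a, |r s a| ≤ rmax)
    (γ : ℝ) (hγ0 : 0 ≤ γ) (hγ1 : γ < 1)
    (Supp : S → Finset A) (hSupp : ∀ s, (Supp s).Nonempty)
    [MetricSpace A] (ℓ : ℝ) (hℓ : 0 ≤ ℓ)
    (hLip : ∀ s a₁ a₂, |r s a₁ - r s a₂| ≤ ℓ * dist a₁ a₂)
    (Qβ : S → A → ℝ) (hfix : TSupp P r γ Supp hSupp Qβ = Qβ)
    (π β : S → A) (επ εP : ℝ)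
    (hεπ : επ = Finset.univ.sup' Finset.univ_nonempty (fun s : S => dist (π s) (β s)))
    (hεP : εP = Finset.univ.sup' Finset.univ_nonempty
      (fun p : S × S => |P p.1 (π p.1) p.2 - P p.1 (β p.1) p.2|))
    (s : S) :
    |Qβ s (π s) - Qβ s (β s)|
      ≤ ℓ * επ + γ * ((Fintype.card S : ℝ) * rmax / (1 - γ)) * εP := by
  have h1γ : (0:ℝ) < 1 - γ := by linarith
  set V : S → ℝ := fun s' => (Supp s').sup' (hSupp s') (fun a' => Qβ s' a') with hV
  set M := supNorm Qβ with hMdef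
  have hQM : ∀ s a, |Qβ s a| ≤ M := fun s a =>
    Finset.le_sup' (fun p : S × A => |Qβ p.1 p.2|) (Finset.mem_univ (s, a))
  have hM0 : 0 ≤ M := le_trans (abs_nonneg _) (hQM s (π s))
  have hVM : ∀ s', |V s'| ≤ M := by
    intro s'
    rw [abs_le]
    obtain ⟨a, ha⟩ := hSupp s'
    constructor
    · exact le_trans (abs_le.mp (hQM s' a)).1 (Finset.le_sup' _ ha)
    · exact Finset.sup'_le _ _ fun b _ => (abs_le.mp (hQM s' b)).2
  have hfix' : ∀ s a, Qβ s a = r s a + γ * ∑ s', P s a s' * V s' := by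
    intro s a
    conv_lhs => rw [← hfix]
    rfl
  have hsumM : ∀ s a, |∑ s', P s a s' * V s'| ≤ M := by
    intro s a
    calc |∑ s', P s a s' * V s'| ≤ ∑ s', |P s a s' * V s'| := Finset.abs_sum_le_sum_abs _ _
      _ ≤ ∑ s', P s a s' * M := by
          apply Finset.sum_le_sum
          intro i _
          rw [abs_mul, abs_of_nonneg (hP0 s a i)]
          exact mul_le_mul_of_nonneg_left (hVM i) (hP0 s a i)
      _ = M := by rw [← Finset.sum_mul, hP1, one_mul]
  have hMb : M ≤ rmax / (1 - γ) := by
    have hstep : M ≤ rmax + γ * M := by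
      apply Finset.sup'_le
      rintro ⟨s', a⟩ _
      calc |Qβ s' a| = |r s' a + γ * ∑ x, P s' a x * V x| := by rw [hfix' s' a]
        _ ≤ |r s' a| + |γ * ∑ x, P s' a x * V x| := abs_add_le _ _
        _ ≤ rmax + γ * M := by
            refine add_le_add (hr s' a) ?_
            rw [abs_mul, abs_of_nonneg hγ0]
            exact mul_le_mul_of_nonneg_left (hsumM s' a) hγ0
    rw [le_div_iff₀ h1γ]
    nlinarith
  have hεπge : dist (π s) (β s) ≤ επ := by
    rw [hεπ]
    exact Finset.le_sup' (fun s : S => dist (π s) (β s)) (Finset.mem_univ s)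
  have hεPge : ∀ s', |P s (π s) s' - P s (β s) s'| ≤ εP := by
    intro s'
    rw [hεP]
    exact Finset.le_sup' (fun p : S × S => |P p.1 (π p.1) p.2 - P p.1 (β p.1) p.2|)
      (Finset.mem_univ (s, s'))
  have hεP0 : 0 ≤ εP := le_trans (abs_nonneg _) (hεPge s)
  have hC0 : 0 ≤ rmax / (1 - γ) := div_nonneg hrmax (le_of_lt h1γ)
  have key : Qβ s (π s) - Qβ s (β s)
      = (r s (π s) - r s (β s)) + γ * ∑ s', (P s (π s) s' - P s (β s) s') * V s' := by
    rw [hfix' s (π s), hfix' s (β s)]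
    rw [Finset.sum_congr rfl (fun i _ => sub_mul (P s (π s) i) (P s (β s) i) (V i)),
      Finset.sum_sub_distrib]
    ring
  have hsum2 : |∑ s', (P s (π s) s' - P s (β s) s') * V s'|
      ≤ (Fintype.card S : ℝ) * (εP * (rmax / (1 - γ))) := by
    calc |∑ s', (P s (π s) s' - P s (β s) s') * V s'|
        ≤ ∑ s', |(P s (π s) s' - P s (β s) s') * V s'| := Finset.abs_sum_le_sum_abs _ _
      _ ≤ ∑ _s' : S, εP * (rmax / (1 - γ)) := by
          apply Finset.sum_le_sum
          intro i _
          rw [abs_mul]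
          exact mul_le_mul (hεPge i) (le_trans (hVM i) hMb) (abs_nonneg _) hεP0
      _ = (Fintype.card S : ℝ) * (εP * (rmax / (1 - γ))) := by
          rw [Finset.sum_const, Finset.card_univ, nsmul_eq_mul]
  calc |Qβ s (π s) - Qβ s (β s)|
      ≤ |r s (π s) - r s (β s)| + |γ * ∑ s', (P s (π s) s' - P s (β s) s') * V s'| := by
        rw [key]; exact abs_add_le _ _
    _ ≤ ℓ * επ + γ * ((Fintype.card S : ℝ) * rmax / (1 - γ)) * εP := by
        refine add_le_add ?_ ?_
        · exact le_trans (hLip s (π s) (β s)) (mul_le_mul_of_nonneg_left hεπge hℓ)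
        · rw [abs_mul, abs_of_nonneg hγ0]
          have := mul_le_mul_of_nonneg_left hsum2 hγ0
          calc γ * |∑ s', (P s (π s) s' - P s (β s) s') * V s'|
              ≤ γ * ((Fintype.card S : ℝ) * (εP * (rmax / (1 - γ)))) := this
            _ = γ * ((Fintype.card S : ℝ) * rmax / (1 - γ)) * εP := by ring
end

section
/- (Pointwise action-gap bound, proved in the course of Theorem 2 and used for the limitation-value estimate) Let Q_{β*} be the fixed point of the support-constrained Bellman optimality operator T_Supp. Then for every state s and all actions a₁, a₂, |Q_{β*}(s,a₁) − Q_{β*}(s,a₂)| ≤ ℓ · dist(a₁, a₂) + γ · (|S| · r_max / (1 − γ)) · max_{s'} |P(s'|s,a₁) − P(s'|s,a₂)|. -/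
open Finset

theorem pointwise_action_gap
    {S A : Type*} [Fintype S] [Fintype A] [Nonempty S] [Nonempty A] [DecidableEq A]
    (P : S → A → S → ℝ) (hP0 : ∀ s a s', 0 ≤ P s a s') (hP1 : ∀ s a, ∑ s', P s a s' = 1)
    (r : S → A → ℝ) (rmax : ℝ) (hrmax : 0 ≤ rmax) (hr : ∀ s a, |r s a| ≤ rmax)
    (γ : ℝ) (hγ0 : 0 ≤ γ) (hγ1 : γ < 1)
    (Supp : S → Finset A) (hSupp : ∀ s, (Supp s).Nonempty)
    [MetricSpace A] (ℓ : ℝ) (hℓ : 0 ≤ ℓ)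
    (hLip : ∀ s a₁ a₂, |r s a₁ - r s a₂| ≤ ℓ * dist a₁ a₂)
    (Qβ : S → A → ℝ) (hfix : TSupp P r γ Supp hSupp Qβ = Qβ)
    (s : S) (a₁ a₂ : A) :
    |Qβ s a₁ - Qβ s a₂|
      ≤ ℓ * dist a₁ a₂
        + γ * ((Fintype.card S : ℝ) * rmax / (1 - γ))
          * Finset.univ.sup' Finset.univ_nonempty (fun s' : S => |P s a₁ s' - P s a₂ s'|) := by

  set K := supNorm Qβ with hK
  have hV : ∀ s', |(Supp s').sup' (hSupp s') (fun a' => Qβ s' a')| ≤ K := by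
    intro s'
    rw [abs_le]
    constructor
    · obtain ⟨a', ha'⟩ := hSupp s'
      refine le_trans ?_ (Finset.le_sup' (fun a' => Qβ s' a') ha')
      have := Finset.le_sup' (fun p : S × A => |Qβ p.1 p.2|) (Finset.mem_univ (s', a'))
      simp only at this
      have h2 : |Qβ s' a'| ≤ K := this
      nlinarith [abs_le.mp h2]
    · apply Finset.sup'_le
      intro a' _
      have : |Qβ s' a'| ≤ K := Finset.le_sup' (fun p : S × A => |Qβ p.1 p.2|) (Finset.mem_univ (s', a'))
      exact (abs_le.mp this).2
  have hQfix : ∀ s a, Qβ s a = r s a + γ * ∑ s', P s a s' * (Supp s').sup' (hSupp s') (fun a' => Qβ s' a') := by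
    intro s a
    conv_lhs => rw [← hfix]
    rfl
  have hKle : K ≤ rmax / (1 - γ) := by
    have h1γ : 0 < 1 - γ := by linarith
    rw [le_div_iff₀ h1γ]
    have hKbound : ∀ p : S × A, |Qβ p.1 p.2| ≤ rmax + γ * K := by
      intro ⟨s, a⟩
      rw [hQfix s a]
      refine (abs_add_le _ _).trans (add_le_add (hr s a) ?_)
      rw [abs_mul, abs_of_nonneg hγ0]
      refine mul_le_mul_of_nonneg_left ?_ hγ0
      calc |∑ s', P s a s' * (Supp s').sup' (hSupp s') (fun a' => Qβ s' a')|
          ≤ ∑ s', |P s a s' * (Supp s').sup' (hSupp s') (fun a' => Qβ s' a')| :=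
            Finset.abs_sum_le_sum_abs _ _
        _ ≤ ∑ s', P s a s' * K := by
            refine Finset.sum_le_sum fun s' _ => ?_
            rw [abs_mul, abs_of_nonneg (hP0 s a s')]
            exact mul_le_mul_of_nonneg_left (hV s') (hP0 s a s')
        _ = K := by rw [← Finset.sum_mul, hP1 s a, one_mul]
    have : K ≤ rmax + γ * K := by
      apply Finset.sup'_le
      intro p _
      exact hKbound p
    nlinarith
  set M := Finset.univ.sup' Finset.univ_nonempty (fun s' : S => |P s a₁ s' - P s a₂ s'|) with hM
  have hM0 : 0 ≤ M := le_trans (abs_nonneg _) (Finset.le_sup' (fun s' : S => |P s a₁ s' - P s a₂ s'|) (Finset.mem_univ (Classical.arbitrary S)))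
  have hK0 : 0 ≤ K := le_trans (abs_nonneg _) (Finset.le_sup' (fun p : S × A => |Qβ p.1 p.2|) (Finset.mem_univ (Classical.arbitrary (S × A))))
  rw [hQfix s a₁, hQfix s a₂]
  have key : |∑ s', P s a₁ s' * (Supp s').sup' (hSupp s') (fun a' => Qβ s' a')
      - ∑ s', P s a₂ s' * (Supp s').sup' (hSupp s') (fun a' => Qβ s' a')|
      ≤ (Fintype.card S : ℝ) * (rmax / (1 - γ)) * M := by
    rw [← Finset.sum_sub_distrib]
    calc |∑ s', (P s a₁ s' * (Supp s').sup' (hSupp s') (fun a' => Qβ s' a')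
            - P s a₂ s' * (Supp s').sup' (hSupp s') (fun a' => Qβ s' a'))|
        ≤ ∑ s', |(P s a₁ s' - P s a₂ s') * (Supp s').sup' (hSupp s') (fun a' => Qβ s' a')| := by
          refine le_trans (le_of_eq ?_) (Finset.abs_sum_le_sum_abs _ _)
          congr 1; refine Finset.sum_congr rfl fun s' _ => ?_; ring
      _ ≤ ∑ _s' : S, M * (rmax / (1 - γ)) := by
          refine Finset.sum_le_sum fun s' _ => ?_
          rw [abs_mul]
          exact mul_le_mul (Finset.le_sup' (fun s' : S => |P s a₁ s' - P s a₂ s'|) (Finset.mem_univ s')) ((hV s').trans hKle)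
            (abs_nonneg _) hM0
      _ = (Fintype.card S : ℝ) * (rmax / (1 - γ)) * M := by
          rw [Finset.sum_const, Finset.card_univ, nsmul_eq_mul]; ring
  calc |r s a₁ + γ * ∑ s', P s a₁ s' * (Supp s').sup' (hSupp s') (fun a' => Qβ s' a')
        - (r s a₂ + γ * ∑ s', P s a₂ s' * (Supp s').sup' (hSupp s') (fun a' => Qβ s' a'))|
      ≤ |r s a₁ - r s a₂| + |γ * ∑ s', P s a₁ s' * (Supp s').sup' (hSupp s') (fun a' => Qβ s' a')
        - γ * ∑ s', P s a₂ s' * (Supp s').sup' (hSupp s') (fun a' => Qβ s' a')| := by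
        refine le_trans (le_of_eq ?_) (abs_add_le _ _); ring_nf
    _ ≤ ℓ * dist a₁ a₂ + γ * ((Fintype.card S : ℝ) * rmax / (1 - γ)) * M := by
        refine add_le_add (hLip s a₁ a₂) ?_
        rw [← mul_sub, abs_mul, abs_of_nonneg hγ0]
        have := mul_le_mul_of_nonneg_left key hγ0
        calc γ * |_| ≤ γ * ((Fintype.card S : ℝ) * (rmax / (1 - γ)) * M) := this
          _ = γ * ((Fintype.card S : ℝ) * rmax / (1 - γ)) * M := by ring
end

section
/- (Theorem 3) Let Q_{β*} be the fixed point of T_Supp. Assume the model-error bounds |r̂(s,a) − r(s,a)| ≤ ε_r and ∑_{s'} |P̂(s'|s,a) − P(s'|s,a)| ≤ ε_P̂ hold for all (s,a), and let β : S → A satisfy β(s) ∈ Supp(s) and Q_{β*}(s,β(s)) = max_{a ∈ Supp(s)} Q_{β*}(s,a) for every s; set ε_π = max_s dist(π(s), β(s)) and ε_P = max_{s,s'} |P(s'|s,π(s)) − P(s'|s,β(s))|. Then for every (s,a), |y_img^{Q_{β*}}(s,a) − Q_{β*}(s,a)| ≤ ε_r + γ · ℓ · ε_π + γ² · (|S|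 · r_max / (1 − γ)) · ε_P + γ · ε_P̂ · r_max / (1 − γ). -/
open Finset

theorem imagination_optimality_gap
    {S A : Type*} [Fintype S] [Fintype A] [Nonempty S] [Nonempty A] [DecidableEq A]
    (P : S → A → S → ℝ) (hP0 : ∀ s a s', 0 ≤ P s a s') (hP1 : ∀ s a, ∑ s', P s a s' = 1)
    (r : S → A → ℝ) (rmax : ℝ) (hrmax : 0 ≤ rmax) (hr : ∀ s a, |r s a| ≤ rmax)
    (γ : ℝ) (hγ0 : 0 ≤ γ) (hγ1 : γ < 1)
    (Supp : S → Finset A) (hSupp : ∀ s, (Supp s).Nonempty)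
    [MetricSpace A] (ℓ : ℝ) (hℓ : 0 ≤ ℓ)
    (hLip : ∀ s a₁ a₂, |r s a₁ - r s a₂| ≤ ℓ * dist a₁ a₂)
    (π : S → A)
    (Phat : S → A → S → ℝ) (hPhat0 : ∀ s a s', 0 ≤ Phat s a s')
    (hPhat1 : ∀ s a, ∑ s', Phat s a s' = 1)
    (rhat : S → A → ℝ)
    (εr εPhat : ℝ)
    (hεr : ∀ s a, |rhat s a - r s a| ≤ εr)
    (hεPhat : ∀ s a, ∑ s', |Phat s a s' - P s a s'| ≤ εPhat)
    (Qβ : S → A → ℝ) (hfix : TSupp P r γ Supp hSupp Qβ = Qβ)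
    (β : S → A) (hβ : ∀ s, β s ∈ Supp s)
    (hβopt : ∀ s, Qβ s (β s) = (Supp s).sup' (hSupp s) (fun a => Qβ s a))
    (επ εP : ℝ)
    (hεπ : επ = Finset.univ.sup' Finset.univ_nonempty (fun s : S => dist (π s) (β s)))
    (hεP : εP = Finset.univ.sup' Finset.univ_nonempty
      (fun p : S × S => |P p.1 (π p.1) p.2 - P p.1 (β p.1) p.2|))
    (s : S) (a : A) :
    |yImg Phat rhat γ π Qβ s a - Qβ s a|
      ≤ εr + γ * ℓ * επ + γ ^ 2 * ((Fintype.card S : ℝ) * rmax / (1 - γ)) * εP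
        + γ * εPhat * rmax / (1 - γ) := by
  have h1γ : (0:ℝ) < 1 - γ := by linarith
  set M := rmax / (1 - γ) with hMdef
  have hM0 : 0 ≤ M := div_nonneg hrmax (le_of_lt h1γ)
  set V : S → ℝ := fun s => (Supp s).sup' (hSupp s) (fun a => Qβ s a) with hVdef
  have hVβ : ∀ s, V s = Qβ s (β s) := fun s => (hβopt s).symm
  have hQeq : ∀ s a, Qβ s a = r s a + γ * ∑ s', P s a s' * V s' := by
    intro s a
    conv_lhs => rw [← hfix]
    rfl
  -- sup norm bound
  have hQle : ∀ s a, |Qβ s a| ≤ M := by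
    set N := supNorm Qβ with hNdef
    have hle : ∀ s a, |Qβ s a| ≤ N :=
      fun s a => Finset.le_sup' (fun p : S × A => |Qβ p.1 p.2|) (Finset.mem_univ (s, a))
    have hVle : ∀ s, |V s| ≤ N := fun s => by rw [hVβ]; exact hle _ _
    have key : ∀ s a, |Qβ s a| ≤ rmax + γ * N := by
      intro s a
      rw [hQeq s a]
      refine (abs_add_le _ _).trans ?_
      have h2 : |γ * ∑ s', P s a s' * V s'| ≤ γ * N := by
        rw [abs_mul, abs_of_nonneg hγ0]
        refine mul_le_mul_of_nonneg_left ?_ hγ0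
        refine (Finset.abs_sum_le_sum_abs _ _).trans ?_
        calc ∑ s', |P s a s' * V s'| ≤ ∑ s', P s a s' * N := by
              refine Finset.sum_le_sum fun s' _ => ?_
              rw [abs_mul, abs_of_nonneg (hP0 s a s')]
              exact mul_le_mul_of_nonneg_left (hVle s') (hP0 s a s')
          _ = N := by rw [← Finset.sum_mul, hP1 s a, one_mul]
      linarith [hr s a]
    have hNM : N ≤ M := by
      obtain ⟨p, -, hp⟩ := Finset.exists_mem_eq_sup' (Finset.univ_nonempty (α := S × A))
        (fun p : S × A => |Qβ p.1 p.2|)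
      have hNp : N = |Qβ p.1 p.2| := by rw [hNdef, supNorm]; exact hp
      have h := key p.1 p.2
      rw [← hNp] at h
      rw [hMdef, le_div_iff₀ h1γ]; nlinarith
    exact fun s a => (hle s a).trans hNM
  have hVM : ∀ s, |V s| ≤ M := fun s => by rw [hVβ]; exact hQle _ _
  -- επ and εP bounds
  have hεπ' : ∀ s, dist (π s) (β s) ≤ επ := by
    intro s; rw [hεπ]
    exact Finset.le_sup' (fun s : S => dist (π s) (β s)) (Finset.mem_univ s)
  have hεP' : ∀ s s', |P s (π s) s' - P s (β s) s'| ≤ εP := by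
    intro s s'; rw [hεP]
    exact Finset.le_sup' (fun p : S × S => |P p.1 (π p.1) p.2 - P p.1 (β p.1) p.2|)
      (Finset.mem_univ (s, s'))
  -- bound on difference of Q values along π vs β
  have hdiff : ∀ t, |Qβ t (π t) - Qβ t (β t)|
      ≤ ℓ * επ + γ * ((Fintype.card S : ℝ) * εP * M) := by
    intro t
    have heq : Qβ t (π t) - Qβ t (β t)
        = (r t (π t) - r t (β t)) + γ * ∑ s', (P t (π t) s' - P t (β t) s') * V s' := by
      have e : ∑ s', (P t (π t) s' - P t (β t) s') * V s'
          = ∑ s', P t (π t) s' * V s' - ∑ s', P t (β t) s' * V s' := by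
        rw [← Finset.sum_sub_distrib]
        exact Finset.sum_congr rfl fun x _ => by ring
      rw [hQeq t (π t), hQeq t (β t), e]; ring
    rw [heq]
    refine (abs_add_le _ _).trans ?_
    have h1 : |r t (π t) - r t (β t)| ≤ ℓ * επ :=
      (hLip t (π t) (β t)).trans (mul_le_mul_of_nonneg_left (hεπ' t) hℓ)
    have h2 : |γ * ∑ s', (P t (π t) s' - P t (β t) s') * V s'|
        ≤ γ * ((Fintype.card S : ℝ) * εP * M) := by
      rw [abs_mul, abs_of_nonneg hγ0]
      refine mul_le_mul_of_nonneg_left ?_ hγ0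
      refine (Finset.abs_sum_le_sum_abs _ _).trans ?_
      calc ∑ s', |(P t (π t) s' - P t (β t) s') * V s'| ≤ ∑ _s' : S, εP * M := by
            refine Finset.sum_le_sum fun s' _ => ?_
            rw [abs_mul]
            exact mul_le_mul (hεP' t s') (hVM s') (abs_nonneg _)
              ((abs_nonneg _).trans (hεP' t s'))
        _ = (Fintype.card S : ℝ) * εP * M := by
            rw [Finset.sum_const, Finset.card_univ, nsmul_eq_mul]; ring
    linarith
  -- main decomposition
  have hmain : yImg Phat rhat γ π Qβ s a - Qβ s a
      = (rhat s a - r s a)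
        + γ * ∑ s', (Phat s a s' - P s a s') * Qβ s' (π s')
        + γ * ∑ s', P s a s' * (Qβ s' (π s') - V s') := by
    have e1 : ∑ s', (Phat s a s' - P s a s') * Qβ s' (π s')
        = ∑ s', Phat s a s' * Qβ s' (π s') - ∑ s', P s a s' * Qβ s' (π s') := by
      rw [← Finset.sum_sub_distrib]
      exact Finset.sum_congr rfl fun x _ => by ring
    have e2 : ∑ s', P s a s' * (Qβ s' (π s') - V s')
        = ∑ s', P s a s' * Qβ s' (π s') - ∑ s', P s a s' * V s' := by
      rw [← Finset.sum_sub_distrib]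
      exact Finset.sum_congr rfl fun x _ => by ring
    rw [yImg, hQeq s a, e1, e2]; ring
  rw [hmain]
  have hA : |rhat s a - r s a| ≤ εr := hεr s a
  have hB : |γ * ∑ s', (Phat s a s' - P s a s') * Qβ s' (π s')| ≤ γ * (εPhat * M) := by
    rw [abs_mul, abs_of_nonneg hγ0]
    refine mul_le_mul_of_nonneg_left ?_ hγ0
    refine (Finset.abs_sum_le_sum_abs _ _).trans ?_
    calc ∑ s', |(Phat s a s' - P s a s') * Qβ s' (π s')|
        ≤ ∑ s', |Phat s a s' - P s a s'| * M := by
          refine Finset.sum_le_sum fun s' _ => ?_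
          rw [abs_mul]
          exact mul_le_mul_of_nonneg_left (hQle _ _) (abs_nonneg _)
      _ = (∑ s', |Phat s a s' - P s a s'|) * M := by rw [Finset.sum_mul]
      _ ≤ εPhat * M := mul_le_mul_of_nonneg_right (hεPhat s a) hM0
  have hC : |γ * ∑ s', P s a s' * (Qβ s' (π s') - V s')|
      ≤ γ * (ℓ * επ + γ * ((Fintype.card S : ℝ) * εP * M)) := by
    rw [abs_mul, abs_of_nonneg hγ0]
    refine mul_le_mul_of_nonneg_left ?_ hγ0
    refine (Finset.abs_sum_le_sum_abs _ _).trans ?_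
    calc ∑ s', |P s a s' * (Qβ s' (π s') - V s')|
        ≤ ∑ s', P s a s' * (ℓ * επ + γ * ((Fintype.card S : ℝ) * εP * M)) := by
          refine Finset.sum_le_sum fun s' _ => ?_
          rw [abs_mul, abs_of_nonneg (hP0 s a s')]
          refine mul_le_mul_of_nonneg_left ?_ (hP0 s a s')
          rw [hVβ]; exact hdiff s'
      _ = ℓ * επ + γ * ((Fintype.card S : ℝ) * εP * M) := by
          rw [← Finset.sum_mul, hP1 s a, one_mul]
  have habs := (abs_add_le _ _).trans (add_le_add ((abs_add_le _ _).trans (add_le_add hA hB)) hC)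
  refine habs.trans (le_of_eq ?_)
  rw [hMdef]
  field_simp
  ring
end

section
/- (In-sample operator discrepancy, Eq. (25) in the proof of Theorem 4) Let Q_{β*} be the fixed point of T_Supp, and let β : S → A satisfy β(s) ∈ Supp(s) and Q_{β*}(s,β(s)) = max_{a ∈ Supp(s)} Q_{β*}(s,a) for every s; set ε_π = max_s dist(π(s), β(s)) and ε_P = max_{s,s'} |P(s'|s,π(s)) − P(s'|s,β(s))|. Then for every pair (s,a) with a ∈ Supp(s), |(T_ILB Q_{β*})(s,a) − (T_Supp Q_{β*})(s,a)| ≤ γ · ℓ · ε_π + γ² · (|S| · r_max / (1 − γ)) · ε_P. -/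
open Finset

theorem in_sample_operator_discrepancy
    {S A : Type*} [Fintype S] [Fintype A] [Nonempty S] [Nonempty A] [DecidableEq A]
    (P : S → A → S → ℝ) (hP0 : ∀ s a s', 0 ≤ P s a s') (hP1 : ∀ s a, ∑ s', P s a s' = 1)
    (r : S → A → ℝ) (rmax : ℝ) (hrmax : 0 ≤ rmax) (hr : ∀ s a, |r s a| ≤ rmax)
    (γ : ℝ) (hγ0 : 0 ≤ γ) (hγ1 : γ < 1)
    (Supp : S → Finset A) (hSupp : ∀ s, (Supp s).Nonempty)
    [MetricSpace A] (ℓ : ℝ) (hℓ : 0 ≤ ℓ)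
    (hLip : ∀ s a₁ a₂, |r s a₁ - r s a₂| ≤ ℓ * dist a₁ a₂)
    (π : S → A)
    (Phat : S → A → S → ℝ) (hPhat0 : ∀ s a s', 0 ≤ Phat s a s')
    (hPhat1 : ∀ s a, ∑ s', Phat s a s' = 1)
    (rhat : S → A → ℝ)
    (δ : ℝ)
    (Qβ : S → A → ℝ) (hfix : TSupp P r γ Supp hSupp Qβ = Qβ)
    (β : S → A) (hβ : ∀ s, β s ∈ Supp s)
    (hβopt : ∀ s, Qβ s (β s) = (Supp s).sup' (hSupp s) (fun a => Qβ s a))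
    (επ εP : ℝ)
    (hεπ : επ = Finset.univ.sup' Finset.univ_nonempty (fun s : S => dist (π s) (β s)))
    (hεP : εP = Finset.univ.sup' Finset.univ_nonempty
      (fun p : S × S => |P p.1 (π p.1) p.2 - P p.1 (β p.1) p.2|))
    (s : S) (a : A) (ha : a ∈ Supp s) :
    |TILB P r γ Supp hSupp π Phat rhat δ Qβ s a - TSupp P r γ Supp hSupp Qβ s a|
      ≤ γ * ℓ * επ + γ ^ 2 * ((Fintype.card S : ℝ) * rmax / (1 - γ)) * εP := by
  have h1γ : 0 < 1 - γ := by linarith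
  have hQfix : ∀ s a, Qβ s a = r s a + γ * ∑ s', P s a s' *
      (Supp s').sup' (hSupp s') (fun a' => Qβ s' a') := by
    intro s a
    conv_lhs => rw [← hfix]
    rfl
  set N := supNorm Qβ with hNdef
  have hNb : ∀ s a, |Qβ s a| ≤ N := by
    intro s a
    exact Finset.le_sup' (fun p : S × A => |Qβ p.1 p.2|) (Finset.mem_univ (s, a))
  have hVb : ∀ s', |(Supp s').sup' (hSupp s') (fun a' => Qβ s' a')| ≤ N := by
    intro s'
    rw [← hβopt s']
    exact hNb s' (β s')
  have hN0 : 0 ≤ N := le_trans (abs_nonneg _) (hNb (Classical.arbitrary S) (Classical.arbitrary A))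
  have hsumV : ∀ s a, |∑ s', P s a s' *
      (Supp s').sup' (hSupp s') (fun a' => Qβ s' a')| ≤ N := by
    intro s a
    calc |∑ s', P s a s' * (Supp s').sup' (hSupp s') (fun a' => Qβ s' a')|
        ≤ ∑ s', |P s a s' * (Supp s').sup' (hSupp s') (fun a' => Qβ s' a')| :=
          Finset.abs_sum_le_sum_abs _ _
      _ ≤ ∑ s', P s a s' * N := by
          refine Finset.sum_le_sum fun s' _ => ?_
          rw [abs_mul, abs_of_nonneg (hP0 s a s')]
          exact mul_le_mul_of_nonneg_left (hVb s') (hP0 s a s')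
      _ = N := by rw [← Finset.sum_mul, hP1, one_mul]
  have hNrec : N ≤ rmax + γ * N := by
    rw [hNdef, supNorm]
    refine Finset.sup'_le _ _ fun p _ => ?_
    rw [hQfix p.1 p.2]
    calc |r p.1 p.2 + γ * ∑ s', P p.1 p.2 s' * (Supp s').sup' (hSupp s') (fun a' => Qβ s' a')|
        ≤ |r p.1 p.2| + |γ * ∑ s', P p.1 p.2 s' * (Supp s').sup' (hSupp s') (fun a' => Qβ s' a')| :=
          abs_add_le _ _
      _ ≤ rmax + γ * N := by
          refine add_le_add (hr _ _) ?_
          rw [abs_mul, abs_of_nonneg hγ0]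
          exact mul_le_mul_of_nonneg_left (hsumV _ _) hγ0
  have hNle : N ≤ rmax / (1 - γ) := by
    rw [le_div_iff₀ h1γ]; nlinarith
  -- bounds on επ, εP
  have hεπb : ∀ s', dist (π s') (β s') ≤ επ := by
    intro s'; rw [hεπ]
    exact Finset.le_sup' (fun s : S => dist (π s) (β s)) (Finset.mem_univ s')
  have hεPb : ∀ s' s'', |P s' (π s') s'' - P s' (β s') s''| ≤ εP := by
    intro s' s''; rw [hεP]
    exact Finset.le_sup' (fun p : S × S => |P p.1 (π p.1) p.2 - P p.1 (β p.1) p.2|)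
      (Finset.mem_univ (s', s''))
  set C : ℝ := ℓ * επ + γ * ((Fintype.card S : ℝ) * rmax / (1 - γ)) * εP with hC
  have hdiff : ∀ s', |Qβ s' (π s') - Qβ s' (β s')| ≤ C := by
    intro s'
    have e1 := hQfix s' (π s')
    have e2 := hQfix s' (β s')
    have key : Qβ s' (π s') - Qβ s' (β s')
        = (r s' (π s') - r s' (β s')) + γ * ∑ s'', (P s' (π s') s'' - P s' (β s') s'') *
            (Supp s'').sup' (hSupp s'') (fun a' => Qβ s'' a') := by
      rw [e1, e2]
      have hs : ∑ s'', (P s' (π s') s'' - P s' (β s') s'') *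
            (Supp s'').sup' (hSupp s'') (fun a' => Qβ s'' a')
          = (∑ s'', P s' (π s') s'' * (Supp s'').sup' (hSupp s'') (fun a' => Qβ s'' a'))
            - ∑ s'', P s' (β s') s'' * (Supp s'').sup' (hSupp s'') (fun a' => Qβ s'' a') := by
        rw [← Finset.sum_sub_distrib]
        exact Finset.sum_congr rfl fun _ _ => by ring
      rw [hs]; ring
    rw [key]
    calc |(r s' (π s') - r s' (β s')) + γ * ∑ s'', (P s' (π s') s'' - P s' (β s') s'') *
            (Supp s'').sup' (hSupp s'') (fun a' => Qβ s'' a')|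
        ≤ |r s' (π s') - r s' (β s')| + |γ * ∑ s'', (P s' (π s') s'' - P s' (β s') s'') *
            (Supp s'').sup' (hSupp s'') (fun a' => Qβ s'' a')| := abs_add_le _ _
      _ ≤ ℓ * επ + γ * ((Fintype.card S : ℝ) * rmax / (1 - γ)) * εP := by
          refine add_le_add ?_ ?_
          · exact le_trans (hLip s' (π s') (β s')) (mul_le_mul_of_nonneg_left (hεπb s') hℓ)
          · rw [abs_mul, abs_of_nonneg hγ0, mul_assoc]
            refine mul_le_mul_of_nonneg_left ?_ hγ0
            calc |∑ s'', (P s' (π s') s'' - P s' (β s') s'') *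
                    (Supp s'').sup' (hSupp s'') (fun a' => Qβ s'' a')|
                ≤ ∑ s'', |(P s' (π s') s'' - P s' (β s') s'') *
                    (Supp s'').sup' (hSupp s'') (fun a' => Qβ s'' a')| :=
                  Finset.abs_sum_le_sum_abs _ _
              _ ≤ ∑ _s'' : S, εP * (rmax / (1 - γ)) := by
                  refine Finset.sum_le_sum fun s'' _ => ?_
                  rw [abs_mul]
                  refine mul_le_mul (hεPb s' s'') (le_trans (hVb s'') hNle) (abs_nonneg _) ?_
                  exact le_trans (abs_nonneg _) (hεPb s' s'')
              _ = (Fintype.card S : ℝ) * rmax / (1 - γ) * εP := by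
                  rw [Finset.sum_const, Finset.card_univ, nsmul_eq_mul]
                  ring
  have hC0 : 0 ≤ C := le_trans (abs_nonneg _) (hdiff (Classical.arbitrary S))
  have hTILB : TILB P r γ Supp hSupp π Phat rhat δ Qβ s a
      = r s a + γ * ∑ s', P s a s' * Qβ s' (π s') := by
    simp [TILB, ha]
  have hTSupp : TSupp P r γ Supp hSupp Qβ s a
      = r s a + γ * ∑ s', P s a s' * Qβ s' (β s') := by
    simp only [TSupp]
    congr 1
    rw [Finset.mul_sum, Finset.mul_sum]
    refine Finset.sum_congr rfl fun s' _ => ?_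
    rw [← hβopt s']
  rw [hTILB, hTSupp]
  have : r s a + γ * ∑ s', P s a s' * Qβ s' (π s')
      - (r s a + γ * ∑ s', P s a s' * Qβ s' (β s'))
      = γ * ∑ s', P s a s' * (Qβ s' (π s') - Qβ s' (β s')) := by
    have hs : ∑ s', P s a s' * (Qβ s' (π s') - Qβ s' (β s'))
        = (∑ s', P s a s' * Qβ s' (π s')) - ∑ s', P s a s' * Qβ s' (β s') := by
      rw [← Finset.sum_sub_distrib]
      exact Finset.sum_congr rfl fun _ _ => by ring
    rw [hs]; ring
  rw [this, abs_mul, abs_of_nonneg hγ0]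
  have hsum : |∑ s', P s a s' * (Qβ s' (π s') - Qβ s' (β s'))| ≤ C := by
    calc |∑ s', P s a s' * (Qβ s' (π s') - Qβ s' (β s'))|
        ≤ ∑ s', |P s a s' * (Qβ s' (π s') - Qβ s' (β s'))| := Finset.abs_sum_le_sum_abs _ _
      _ ≤ ∑ s', P s a s' * C := by
          refine Finset.sum_le_sum fun s' _ => ?_
          rw [abs_mul, abs_of_nonneg (hP0 s a s')]
          exact mul_le_mul_of_nonneg_left (hdiff s') (hP0 s a s')
      _ = C := by rw [← Finset.sum_mul, hP1, one_mul]
  calc γ * |∑ s', P s a s' * (Qβ s' (π s') - Qβ s' (β s'))|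
      ≤ γ * C := mul_le_mul_of_nonneg_left hsum hγ0
    _ = γ * ℓ * επ + γ ^ 2 * ((Fintype.card S : ℝ) * rmax / (1 - γ)) * εP := by
        rw [hC]; ring
end

section
/- (Limitation-value gap, Eq. (32) in the proof of Theorem 4) Let Q_{β*} be the fixed point of T_Supp, let δ ∈ ℝ, and suppose β : S → A satisfies β(s) ∈ Supp(s) and Q_{β*}(s,β(s)) = max_{a ∈ Supp(s)} Q_{β*}(s,a) for every s. Then for every state s and every action a, |y_lmt^{Q_{β*}}(s) + δ − Q_{β*}(s,a)| ≤ ℓ · dist(a, β(s)) + γ · (|S| · r_max / (1 − γ)) · max_{s'} |P(s'|s,a) − P(s'|s,β(s))| + |δ|. -/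
open Finset

theorem limitation_value_gap
    {S A : Type*} [Fintype S] [Fintype A] [Nonempty S] [Nonempty A] [DecidableEq A]
    (P : S → A → S → ℝ) (hP0 : ∀ s a s', 0 ≤ P s a s') (hP1 : ∀ s a, ∑ s', P s a s' = 1)
    (r : S → A → ℝ) (rmax : ℝ) (hrmax : 0 ≤ rmax) (hr : ∀ s a, |r s a| ≤ rmax)
    (γ : ℝ) (hγ0 : 0 ≤ γ) (hγ1 : γ < 1)
    (Supp : S → Finset A) (hSupp : ∀ s, (Supp s).Nonempty)
    [MetricSpace A] (ℓ : ℝ) (hℓ : 0 ≤ ℓ)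
    (hLip : ∀ s a₁ a₂, |r s a₁ - r s a₂| ≤ ℓ * dist a₁ a₂)
    (δ : ℝ)
    (Qβ : S → A → ℝ) (hfix : TSupp P r γ Supp hSupp Qβ = Qβ)
    (β : S → A) (hβ : ∀ s, β s ∈ Supp s)
    (hβopt : ∀ s, Qβ s (β s) = (Supp s).sup' (hSupp s) (fun a => Qβ s a))
    (s : S) (a : A) :
    |yLmt Supp hSupp Qβ s + δ - Qβ s a|
      ≤ ℓ * dist a (β s)
        + γ * ((Fintype.card S : ℝ) * rmax / (1 - γ))
          * Finset.univ.sup' Finset.univ_nonempty (fun s' : S => |P s a s' - P s (β s) s'|)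
        + |δ| := by

  have hγ' : 0 < 1 - γ := by linarith
  set M := supNorm Qβ with hM
  have hQle : ∀ t b, |Qβ t b| ≤ M := fun t b =>
    Finset.le_sup' (fun p : S × A => |Qβ p.1 p.2|) (Finset.mem_univ (t, b))
  set V : S → ℝ := fun s' => (Supp s').sup' (hSupp s') (fun a' => Qβ s' a') with hV
  have hVle : ∀ s', |V s'| ≤ M := by
    intro s'
    rw [abs_le]
    constructor
    · obtain ⟨a', ha'⟩ := hSupp s'
      refine le_trans ?_ (Finset.le_sup' _ ha')
      have h := hQle s' a'; rw [abs_le] at h; linarith [h.1]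
    · apply Finset.sup'_le
      intro a' _
      exact le_trans (le_abs_self _) (hQle s' a')
  have hfix' : ∀ t b, Qβ t b = r t b + γ * ∑ s', P t b s' * V s' := by
    intro t b
    conv_lhs => rw [← hfix]
    rfl
  have hsumM : ∀ t (b : A), |∑ s', P t b s' * V s'| ≤ M := by
    intro t b
    calc |∑ s', P t b s' * V s'| ≤ ∑ s', |P t b s' * V s'| :=
          Finset.abs_sum_le_sum_abs _ _
      _ ≤ ∑ s', P t b s' * M := by
          apply Finset.sum_le_sum; intro s' _
          rw [abs_mul, abs_of_nonneg (hP0 _ _ _)]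
          exact mul_le_mul_of_nonneg_left (hVle s') (hP0 _ _ _)
      _ = M := by rw [← Finset.sum_mul, hP1, one_mul]
  have hMbound : M ≤ rmax / (1 - γ) := by
    have h1 : M ≤ rmax + γ * M := by
      apply Finset.sup'_le
      intro p _
      rw [hfix' p.1 p.2]
      calc |r p.1 p.2 + γ * ∑ s', P p.1 p.2 s' * V s'|
          ≤ |r p.1 p.2| + |γ * ∑ s', P p.1 p.2 s' * V s'| := abs_add_le _ _
        _ ≤ rmax + γ * M := by
            rw [abs_mul, abs_of_nonneg hγ0]
            exact add_le_add (hr _ _) (mul_le_mul_of_nonneg_left (hsumM _ _) hγ0)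
    rw [le_div_iff₀ hγ']
    nlinarith
  have hM' : 0 ≤ rmax / (1 - γ) := div_nonneg hrmax (le_of_lt hγ')
  set D := Finset.univ.sup' Finset.univ_nonempty (fun s' : S => |P s a s' - P s (β s) s'|) with hD
  have hDle : ∀ s', |P s (β s) s' - P s a s'| ≤ D := by
    intro s'
    rw [abs_sub_comm]
    exact Finset.le_sup' (fun s' : S => |P s a s' - P s (β s) s'|) (Finset.mem_univ s')
  have key : |Qβ s (β s) - Qβ s a|
      ≤ ℓ * dist a (β s) + γ * ((Fintype.card S : ℝ) * rmax / (1 - γ)) * D := by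
    rw [hfix' s (β s), hfix' s a]
    have heq : (r s (β s) + γ * ∑ s', P s (β s) s' * V s')
          - (r s a + γ * ∑ s', P s a s' * V s')
        = (r s (β s) - r s a) + γ * ∑ s', (P s (β s) s' - P s a s') * V s' := by
      have h2 : ∑ s', (P s (β s) s' - P s a s') * V s'
          = ∑ s', P s (β s) s' * V s' - ∑ s', P s a s' * V s' := by
        rw [← Finset.sum_sub_distrib]
        apply Finset.sum_congr rfl
        intro s' _
        ring
      rw [h2]; ring
    rw [heq]
    have hsum2 : |∑ s', (P s (β s) s' - P s a s') * V s'|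
        ≤ (Fintype.card S : ℝ) * (D * (rmax / (1 - γ))) := by
      calc |∑ s', (P s (β s) s' - P s a s') * V s'|
          ≤ ∑ s', |(P s (β s) s' - P s a s') * V s'| :=
            Finset.abs_sum_le_sum_abs _ _
        _ ≤ ∑ _s' : S, D * (rmax / (1 - γ)) := by
            apply Finset.sum_le_sum; intro s' _
            rw [abs_mul]
            exact mul_le_mul (hDle s') (le_trans (hVle s') hMbound) (abs_nonneg _)
              (le_trans (abs_nonneg _) (hDle s'))
        _ = (Fintype.card S : ℝ) * (D * (rmax / (1 - γ))) := by
            rw [Finset.sum_const, nsmul_eq_mul, Finset.card_univ]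
    calc |(r s (β s) - r s a) + γ * ∑ s', (P s (β s) s' - P s a s') * V s'|
        ≤ |r s (β s) - r s a| + |γ * ∑ s', (P s (β s) s' - P s a s') * V s'| := abs_add_le _ _
      _ ≤ ℓ * dist a (β s) + γ * ((Fintype.card S : ℝ) * rmax / (1 - γ)) * D := by
          apply add_le_add
          · have := hLip s (β s) a
            rwa [dist_comm (β s) a] at this
          · rw [abs_mul, abs_of_nonneg hγ0]
            have := mul_le_mul_of_nonneg_left hsum2 hγ0
            calc γ * |∑ s', (P s (β s) s' - P s a s') * V s'|
                ≤ γ * ((Fintype.card S : ℝ) * (D * (rmax / (1 - γ)))) := this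
              _ = γ * ((Fintype.card S : ℝ) * rmax / (1 - γ)) * D := by ring
  have hyl : yLmt Supp hSupp Qβ s = Qβ s (β s) := (hβopt s).symm
  rw [hyl]
  have hstep : Qβ s (β s) + δ - Qβ s a = (Qβ s (β s) - Qβ s a) + δ := by ring
  rw [hstep]
  calc |(Qβ s (β s) - Qβ s a) + δ| ≤ |Qβ s (β s) - Qβ s a| + |δ| := abs_add_le _ _
    _ ≤ ℓ * dist a (β s) + γ * ((Fintype.card S : ℝ) * rmax / (1 - γ)) * D + |δ| := by
        linarith [key]
end

section
/- (Imagination-value gap with offset, Eq. (31) in the proof of Theorem 4) Let Q_{β*} be the fixed point of T_Supp and δ ∈ ℝ. Assume the model-error bounds |r̂(s,a) − r(s,a)| ≤ ε_r and ∑_{s'} |P̂(s'|s,a) − P(s'|s,a)| ≤ ε_P̂ hold for all (s,a), and let β : S → A satisfy β(s) ∈ Supp(s) and Q_{β*}(s,β(s)) = max_{a ∈ Supp(s)} Q_{β*}(s,a) for every s; set ε_π = max_s dist(π(s), β(s)) and ε_P = max_{s,s'} |P(s'|s,π(s)) − P(s'|s,β(s))|. Then for every (s,a), |y_img^{Q_{β*}}(s,a)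 + δ − Q_{β*}(s,a)| ≤ ε_r + γ · ℓ · ε_π + γ² · (|S| · r_max / (1 − γ)) · ε_P + γ · ε_P̂ · r_max / (1 − γ) + |δ|. -/
open Finset

theorem imagination_value_gap_with_offset
    {S A : Type*} [Fintype S] [Fintype A] [Nonempty S] [Nonempty A] [DecidableEq A]
    (P : S → A → S → ℝ) (hP0 : ∀ s a s', 0 ≤ P s a s') (hP1 : ∀ s a, ∑ s', P s a s' = 1)
    (r : S → A → ℝ) (rmax : ℝ) (hrmax : 0 ≤ rmax) (hr : ∀ s a, |r s a| ≤ rmax)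
    (γ : ℝ) (hγ0 : 0 ≤ γ) (hγ1 : γ < 1)
    (Supp : S → Finset A) (hSupp : ∀ s, (Supp s).Nonempty)
    [MetricSpace A] (ℓ : ℝ) (hℓ : 0 ≤ ℓ)
    (hLip : ∀ s a₁ a₂, |r s a₁ - r s a₂| ≤ ℓ * dist a₁ a₂)
    (π : S → A)
    (Phat : S → A → S → ℝ) (hPhat0 : ∀ s a s', 0 ≤ Phat s a s')
    (hPhat1 : ∀ s a, ∑ s', Phat s a s' = 1)
    (rhat : S → A → ℝ)
    (δ : ℝ) (εr εPhat : ℝ)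
    (hεr : ∀ s a, |rhat s a - r s a| ≤ εr)
    (hεPhat : ∀ s a, ∑ s', |Phat s a s' - P s a s'| ≤ εPhat)
    (Qβ : S → A → ℝ) (hfix : TSupp P r γ Supp hSupp Qβ = Qβ)
    (β : S → A) (hβ : ∀ s, β s ∈ Supp s)
    (hβopt : ∀ s, Qβ s (β s) = (Supp s).sup' (hSupp s) (fun a => Qβ s a))
    (επ εP : ℝ)
    (hεπ : επ = Finset.univ.sup' Finset.univ_nonempty (fun s : S => dist (π s) (β s)))
    (hεP : εP = Finset.univ.sup' Finset.univ_nonempty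
      (fun p : S × S => |P p.1 (π p.1) p.2 - P p.1 (β p.1) p.2|))
    (s : S) (a : A) :
    |yImg Phat rhat γ π Qβ s a + δ - Qβ s a|
      ≤ εr + γ * ℓ * επ + γ ^ 2 * ((Fintype.card S : ℝ) * rmax / (1 - γ)) * εP
        + γ * εPhat * rmax / (1 - γ) + |δ| := by
  have h1γ : (0:ℝ) < 1 - γ := by linarith
  set M := supNorm Qβ with hMdef
  have hQle : ∀ s a, |Qβ s a| ≤ M := fun s a =>
    Finset.le_sup' (fun p : S × A => |Qβ p.1 p.2|) (Finset.mem_univ (s, a))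
  have hM0 : 0 ≤ M := le_trans (abs_nonneg _)
    (hQle (Classical.arbitrary S) (Classical.arbitrary A))
  -- fixed point equation
  have hQ : ∀ s a, Qβ s a = r s a + γ * ∑ s', P s a s' * Qβ s' (β s') := by
    intro s a
    conv_lhs => rw [← hfix]
    unfold TSupp
    congr 1
    congr 1
    exact Finset.sum_congr rfl fun s' _ => by rw [← hβopt s']
  -- sum bound helper
  have hsum : ∀ s a, |∑ s', P s a s' * Qβ s' (β s')| ≤ M := by
    intro s a
    calc |∑ s', P s a s' * Qβ s' (β s')| ≤ ∑ s', |P s a s' * Qβ s' (β s')| :=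
          Finset.abs_sum_le_sum_abs _ _
      _ ≤ ∑ s', P s a s' * M := by
          apply Finset.sum_le_sum
          intro s' _
          rw [abs_mul, abs_of_nonneg (hP0 s a s')]
          exact mul_le_mul_of_nonneg_left (hQle _ _) (hP0 s a s')
      _ = M := by rw [← Finset.sum_mul, hP1, one_mul]
  -- M bound
  have hMb : M ≤ rmax / (1 - γ) := by
    obtain ⟨p, _, hp⟩ := Finset.exists_mem_eq_sup' Finset.univ_nonempty
      (fun p : S × A => |Qβ p.1 p.2|)
    have : M = |Qβ p.1 p.2| := hp
    rw [this, hQ p.1 p.2]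
    have h1 : |r p.1 p.2 + γ * ∑ s', P p.1 p.2 s' * Qβ s' (β s')| ≤ rmax + γ * M := by
      calc |r p.1 p.2 + γ * ∑ s', P p.1 p.2 s' * Qβ s' (β s')|
          ≤ |r p.1 p.2| + |γ * ∑ s', P p.1 p.2 s' * Qβ s' (β s')| := abs_add_le _ _
        _ ≤ rmax + γ * M := by
            gcongr
            · exact hr _ _
            · rw [abs_mul, abs_of_nonneg hγ0]
              exact mul_le_mul_of_nonneg_left (hsum _ _) hγ0
    rw [le_div_iff₀ h1γ]
    have hM' : |Qβ p.1 p.2| = M := hp.symm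
    rw [hQ p.1 p.2] at hM'
    nlinarith [h1]
  have hεπ0 : ∀ s, dist (π s) (β s) ≤ επ := by
    intro s; rw [hεπ]
    exact Finset.le_sup' (fun s : S => dist (π s) (β s)) (Finset.mem_univ s)
  have hεπnn : 0 ≤ επ := le_trans dist_nonneg (hεπ0 (Classical.arbitrary S))
  have hεP0 : ∀ s s', |P s (π s) s' - P s (β s) s'| ≤ εP := by
    intro s s'; rw [hεP]
    exact Finset.le_sup' (fun p : S × S => |P p.1 (π p.1) p.2 - P p.1 (β p.1) p.2|)
      (Finset.mem_univ (s, s'))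
  have hεPnn : 0 ≤ εP := le_trans (abs_nonneg _)
    (hεP0 (Classical.arbitrary S) (Classical.arbitrary S))
  have hεPhatnn : 0 ≤ εPhat := le_trans (Finset.sum_nonneg fun s' _ => abs_nonneg _)
    (hεPhat (Classical.arbitrary S) (Classical.arbitrary A))
  -- per-state difference bound
  have hdiff : ∀ s', |Qβ s' (π s') - Qβ s' (β s')|
      ≤ ℓ * επ + γ * ((Fintype.card S : ℝ) * εP * M) := by
    intro s'
    rw [hQ s' (π s'), hQ s' (β s')]
    have heq : r s' (π s') + γ * ∑ s'', P s' (π s') s'' * Qβ s'' (β s'')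
        - (r s' (β s') + γ * ∑ s'', P s' (β s') s'' * Qβ s'' (β s''))
        = (r s' (π s') - r s' (β s'))
          + γ * ∑ s'', (P s' (π s') s'' - P s' (β s') s'') * Qβ s'' (β s'') := by
      rw [Finset.sum_congr rfl (fun s'' _ => sub_mul (P s' (π s') s'') (P s' (β s') s'') (Qβ s'' (β s''))),
        Finset.sum_sub_distrib]
      ring
    rw [heq]
    calc |(r s' (π s') - r s' (β s'))
          + γ * ∑ s'', (P s' (π s') s'' - P s' (β s') s'') * Qβ s'' (β s'')|
        ≤ |r s' (π s') - r s' (β s')|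
          + |γ * ∑ s'', (P s' (π s') s'' - P s' (β s') s'') * Qβ s'' (β s'')| := abs_add_le _ _
      _ ≤ ℓ * επ + γ * ((Fintype.card S : ℝ) * εP * M) := by
          gcongr
          · exact le_trans (hLip s' (π s') (β s'))
              (mul_le_mul_of_nonneg_left (hεπ0 s') hℓ)
          · rw [abs_mul, abs_of_nonneg hγ0]
            apply mul_le_mul_of_nonneg_left _ hγ0
            calc |∑ s'', (P s' (π s') s'' - P s' (β s') s'') * Qβ s'' (β s'')|
                ≤ ∑ s'', |(P s' (π s') s'' - P s' (β s') s'') * Qβ s'' (β s'')| :=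
                  Finset.abs_sum_le_sum_abs _ _
              _ ≤ ∑ _s'' : S, εP * M := by
                  apply Finset.sum_le_sum
                  intro s'' _
                  rw [abs_mul]
                  exact mul_le_mul (hεP0 s' s'') (hQle _ _) (abs_nonneg _) hεPnn
              _ = (Fintype.card S : ℝ) * εP * M := by
                  rw [Finset.sum_const, Finset.card_univ, nsmul_eq_mul]; ring
  -- decomposition
  set X1 := rhat s a - r s a with hX1
  set X2 := ∑ s', (Phat s a s' - P s a s') * Qβ s' (π s') with hX2
  set X3 := ∑ s', P s a s' * (Qβ s' (π s') - Qβ s' (β s')) with hX3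
  have key : yImg Phat rhat γ π Qβ s a + δ - Qβ s a = X1 + γ * X2 + γ * X3 + δ := by
    rw [hQ s a]
    show rhat s a + γ * ∑ s', Phat s a s' * Qβ s' (π s') + δ
      - (r s a + γ * ∑ s', P s a s' * Qβ s' (β s')) = _
    have hsplit : X2 + X3 = ∑ s', Phat s a s' * Qβ s' (π s')
        - ∑ s', P s a s' * Qβ s' (β s') := by
      rw [hX2, hX3, ← Finset.sum_add_distrib, ← Finset.sum_sub_distrib]
      exact Finset.sum_congr rfl fun s' _ => by ring
    rw [hX1]
    linear_combination (-γ) * hsplit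
  rw [key]
  have b1 : |X1| ≤ εr := hεr s a
  have b2 : |X2| ≤ εPhat * M := by
    calc |X2| ≤ ∑ s', |(Phat s a s' - P s a s') * Qβ s' (π s')| :=
          Finset.abs_sum_le_sum_abs _ _
      _ ≤ ∑ s', |Phat s a s' - P s a s'| * M := by
          apply Finset.sum_le_sum
          intro s' _
          rw [abs_mul]
          exact mul_le_mul_of_nonneg_left (hQle _ _) (abs_nonneg _)
      _ = (∑ s', |Phat s a s' - P s a s'|) * M := by rw [Finset.sum_mul]
      _ ≤ εPhat * M := mul_le_mul_of_nonneg_right (hεPhat s a) hM0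
  have b3 : |X3| ≤ ℓ * επ + γ * ((Fintype.card S : ℝ) * εP * M) := by
    calc |X3| ≤ ∑ s', |P s a s' * (Qβ s' (π s') - Qβ s' (β s'))| :=
          Finset.abs_sum_le_sum_abs _ _
      _ ≤ ∑ s', P s a s' * (ℓ * επ + γ * ((Fintype.card S : ℝ) * εP * M)) := by
          apply Finset.sum_le_sum
          intro s' _
          rw [abs_mul, abs_of_nonneg (hP0 s a s')]
          exact mul_le_mul_of_nonneg_left (hdiff s') (hP0 s a s')
      _ = ℓ * επ + γ * ((Fintype.card S : ℝ) * εP * M) := by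
          rw [← Finset.sum_mul, hP1, one_mul]
  have habs : |X1 + γ * X2 + γ * X3 + δ| ≤ |X1| + γ * |X2| + γ * |X3| + |δ| := by
    calc |X1 + γ * X2 + γ * X3 + δ| ≤ |X1 + γ * X2 + γ * X3| + |δ| := abs_add_le _ _
      _ ≤ |X1 + γ * X2| + |γ * X3| + |δ| := by gcongr; exact abs_add_le _ _
      _ ≤ |X1| + |γ * X2| + |γ * X3| + |δ| := by gcongr; exact abs_add_le _ _
      _ = |X1| + γ * |X2| + γ * |X3| + |δ| := by
          rw [abs_mul, abs_mul, abs_of_nonneg hγ0]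
  refine le_trans habs ?_
  have hcard : (0:ℝ) ≤ (Fintype.card S : ℝ) := Nat.cast_nonneg _
  have hMb2 : εPhat * M ≤ εPhat * (rmax / (1 - γ)) :=
    mul_le_mul_of_nonneg_left hMb hεPhatnn
  have hMb3 : (Fintype.card S : ℝ) * εP * M ≤ (Fintype.card S : ℝ) * εP * (rmax / (1 - γ)) :=
    mul_le_mul_of_nonneg_left hMb (mul_nonneg hcard hεPnn)
  have g2 : γ * |X2| ≤ γ * εPhat * rmax / (1 - γ) := by
    have := mul_le_mul_of_nonneg_left (le_trans b2 hMb2) hγ0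
    calc γ * |X2| ≤ γ * (εPhat * (rmax / (1 - γ))) := this
      _ = γ * εPhat * rmax / (1 - γ) := by ring
  have g3 : γ * |X3| ≤ γ * ℓ * επ + γ ^ 2 * ((Fintype.card S : ℝ) * rmax / (1 - γ)) * εP := by
    have h := mul_le_mul_of_nonneg_left b3 hγ0
    have h2 : γ * (ℓ * επ + γ * ((Fintype.card S : ℝ) * εP * M))
        ≤ γ * (ℓ * επ + γ * ((Fintype.card S : ℝ) * εP * (rmax / (1 - γ)))) := by
      apply mul_le_mul_of_nonneg_left _ hγ0
      have := mul_le_mul_of_nonneg_left hMb3 hγ0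
      linarith
    calc γ * |X3| ≤ γ * (ℓ * επ + γ * ((Fintype.card S : ℝ) * εP * (rmax / (1 - γ)))) :=
          le_trans h h2
      _ = γ * ℓ * επ + γ ^ 2 * ((Fintype.card S : ℝ) * rmax / (1 - γ)) * εP := by ring
  linarith
end

section
/- (Theorem 4, Action-value gap) Suppose T_ILB satisfies the γ-contraction property ‖T_ILB Q₁ − T_ILB Q₂‖∞ ≤ γ · ‖Q₁ − Q₂‖∞ for all Q-functions Q₁, Q₂ (as asserted in Theorem 1), let Q_ILB be a fixed point of T_ILB, and let Q_{β*} be the fixed point of T_Supp. Assume the model-error bounds |r̂(s,a) − r(s,a)| ≤ ε_r and ∑_{s'} |P̂(s'|s,a) − P(s'|s,a)| ≤ ε_P̂ hold for all (s,a); let β : S → A satisfy β(s) ∈ Supp(s) and Q_{β*}(s,β(s)) = max_{a ∈ Supp(s)} Q_{β*}(s,a) for every s; and assume dist(a, β(s)) ≤ ε_π and |P(s'|s,a) − P(s'|s,β(s))| ≤ ε_P for all s, a, s'. Then ‖Q_ILB − Q_{β*}‖∞ ≤ ε_r / (1 − γ) + ℓ · ε_π / (1 − γ) + γ · |S| ·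 r_max · ε_P / (1 − γ)² + γ · r_max · ε_P̂ / (1 − γ)² + |δ| / (1 − γ). -/
open Finset

lemma supNorm_le' {S A : Type*} [Fintype S] [Fintype A] [Nonempty S] [Nonempty A]
    (Q : S → A → ℝ) (c : ℝ) (h : ∀ s a, |Q s a| ≤ c) : supNorm Q ≤ c :=
  Finset.sup'_le _ _ (fun p _ => h p.1 p.2)

lemma le_supNorm' {S A : Type*} [Fintype S] [Fintype A] [Nonempty S] [Nonempty A]
    (Q : S → A → ℝ) (s : S) (a : A) : |Q s a| ≤ supNorm Q :=
  Finset.le_sup' (fun p : S × A => |Q p.1 p.2|) (Finset.mem_univ (s, a))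

lemma wsum_abs_le' {S : Type*} [Fintype S] (w x : S → ℝ) (c : ℝ)
    (hw : ∀ s, 0 ≤ w s) (hw1 : ∑ s, w s = 1) (hx : ∀ s, |x s| ≤ c) :
    |∑ s, w s * x s| ≤ c := by
  calc |∑ s, w s * x s| ≤ ∑ s, |w s * x s| := Finset.abs_sum_le_sum_abs _ _
    _ = ∑ s, w s * |x s| := by
        refine Finset.sum_congr rfl (fun s _ => ?_)
        rw [abs_mul, abs_of_nonneg (hw s)]
    _ ≤ ∑ s, w s * c := Finset.sum_le_sum (fun s _ => mul_le_mul_of_nonneg_left (hx s) (hw s))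
    _ = c := by rw [← Finset.sum_mul, hw1, one_mul]

lemma dsum_abs_le' {S : Type*} [Fintype S] (d x : S → ℝ) (c ε : ℝ) (hc : 0 ≤ c)
    (hd : ∑ s, |d s| ≤ ε) (hx : ∀ s, |x s| ≤ c) :
    |∑ s, d s * x s| ≤ ε * c := by
  calc |∑ s, d s * x s| ≤ ∑ s, |d s * x s| := Finset.abs_sum_le_sum_abs _ _
    _ = ∑ s, |d s| * |x s| := by
        refine Finset.sum_congr rfl (fun s _ => ?_); rw [abs_mul]
    _ ≤ ∑ s, |d s| * c := Finset.sum_le_sum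
        (fun s _ => mul_le_mul_of_nonneg_left (hx s) (abs_nonneg _))
    _ = (∑ s, |d s|) * c := (Finset.sum_mul _ _ _).symm
    _ ≤ ε * c := mul_le_mul_of_nonneg_right hd hc

theorem action_value_gap
    {S A : Type*} [Fintype S] [Fintype A] [Nonempty S] [Nonempty A] [DecidableEq A]
    (P : S → A → S → ℝ) (hP0 : ∀ s a s', 0 ≤ P s a s') (hP1 : ∀ s a, ∑ s', P s a s' = 1)
    (r : S → A → ℝ) (rmax : ℝ) (hrmax : 0 ≤ rmax) (hr : ∀ s a, |r s a| ≤ rmax)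
    (γ : ℝ) (hγ0 : 0 ≤ γ) (hγ1 : γ < 1)
    (Supp : S → Finset A) (hSupp : ∀ s, (Supp s).Nonempty)
    [MetricSpace A] (ℓ : ℝ) (hℓ : 0 ≤ ℓ)
    (hLip : ∀ s a₁ a₂, |r s a₁ - r s a₂| ≤ ℓ * dist a₁ a₂)
    (π : S → A)
    (Phat : S → A → S → ℝ) (hPhat0 : ∀ s a s', 0 ≤ Phat s a s')
    (hPhat1 : ∀ s a, ∑ s', Phat s a s' = 1)
    (rhat : S → A → ℝ)
    (δ : ℝ)
    (hcontr : ∀ Q₁ Q₂ : S → A → ℝ,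
      supNorm (fun s a => TILB P r γ Supp hSupp π Phat rhat δ Q₁ s a
                        - TILB P r γ Supp hSupp π Phat rhat δ Q₂ s a)
        ≤ γ * supNorm (fun s a => Q₁ s a - Q₂ s a))
    (QILB : S → A → ℝ) (hILBfix : TILB P r γ Supp hSupp π Phat rhat δ QILB = QILB)
    (Qβ : S → A → ℝ) (hfix : TSupp P r γ Supp hSupp Qβ = Qβ)
    (εr εPhat : ℝ)
    (hεr : ∀ s a, |rhat s a - r s a| ≤ εr)
    (hεPhat : ∀ s a, ∑ s', |Phat s a s' - P s a s'| ≤ εPhat)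
    (β : S → A) (hβ : ∀ s, β s ∈ Supp s)
    (hβopt : ∀ s, Qβ s (β s) = (Supp s).sup' (hSupp s) (fun a => Qβ s a))
    (επ εP : ℝ)
    (hεπ : ∀ s (a : A), dist a (β s) ≤ επ)
    (hεP : ∀ s (a : A) s', |P s a s' - P s (β s) s'| ≤ εP) :
    supNorm (fun s a => QILB s a - Qβ s a)
      ≤ εr / (1 - γ) + ℓ * επ / (1 - γ)
        + γ * (Fintype.card S : ℝ) * rmax * εP / (1 - γ) ^ 2
        + γ * rmax * εPhat / (1 - γ) ^ 2
        + |δ| / (1 - γ) := by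
  have h1γ : (0 : ℝ) < 1 - γ := by linarith
  obtain ⟨s₀⟩ := (inferInstance : Nonempty S)
  obtain ⟨a₀⟩ := (inferInstance : Nonempty A)
  have hεr0 : 0 ≤ εr := le_trans (abs_nonneg _) (hεr s₀ a₀)
  have hεπ0 : 0 ≤ επ := le_trans dist_nonneg (hεπ s₀ a₀)
  have hεP0 : 0 ≤ εP := le_trans (abs_nonneg _) (hεP s₀ a₀ s₀)
  have hεPhat0 : 0 ≤ εPhat :=
    le_trans (Finset.sum_nonneg (fun s _ => abs_nonneg _)) (hεPhat s₀ a₀)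
  obtain ⟨V, hVdef⟩ : ∃ V : S → ℝ, V = fun s => (Supp s).sup' (hSupp s) (fun a => Qβ s a) :=
    ⟨_, rfl⟩
  have hfix' : ∀ s a, Qβ s a = r s a + γ * ∑ s', P s a s' * V s' := by
    intro s a
    conv_lhs => rw [← hfix]
    simp only [TSupp, hVdef]
  have hVβ : ∀ s, V s = Qβ s (β s) := by intro s; rw [hVdef]; exact (hβopt s).symm
  -- bound on Qβ
  obtain ⟨M, hMdef⟩ : ∃ M : ℝ, M = supNorm Qβ := ⟨_, rfl⟩
  have hQM : ∀ s a, |Qβ s a| ≤ M := by intro s a; rw [hMdef]; exact le_supNorm' Qβ s a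
  have hVM : ∀ s, |V s| ≤ M := by intro s; rw [hVβ]; exact hQM s (β s)
  have hMle : M ≤ rmax / (1 - γ) := by
    have h1 : M ≤ rmax + γ * M := by
      rw [hMdef]
      refine supNorm_le' Qβ _ (fun s a => ?_)
      rw [← hMdef]
      rw [hfix' s a]
      refine (abs_add_le _ _).trans ?_
      have h2 : |γ * ∑ s', P s a s' * V s'| ≤ γ * M := by
        rw [abs_mul, abs_of_nonneg hγ0]
        exact mul_le_mul_of_nonneg_left
          (wsum_abs_le' (P s a) V M (hP0 s a) (hP1 s a) hVM) hγ0
      exact add_le_add (hr s a) h2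
    rw [le_div_iff₀ h1γ]; nlinarith
  have hV0 : ∀ s, |V s| ≤ rmax / (1 - γ) := fun s => (hVM s).trans hMle
  -- gap bound
  obtain ⟨G, hGdef⟩ : ∃ G : ℝ,
      G = ℓ * επ + γ * (((Fintype.card S : ℝ) * εP) * (rmax / (1 - γ))) := ⟨_, rfl⟩
  have hG0 : 0 ≤ G := by
    rw [hGdef]
    exact add_nonneg (mul_nonneg hℓ hεπ0)
      (mul_nonneg hγ0 (mul_nonneg (mul_nonneg (Nat.cast_nonneg _) hεP0)
        (div_nonneg hrmax h1γ.le)))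
  have hgap : ∀ s (a : A), |Qβ s a - Qβ s (β s)| ≤ G := by
    intro s a
    have key : Qβ s a - Qβ s (β s)
        = (r s a - r s (β s)) + γ * ∑ s', (P s a s' - P s (β s) s') * V s' := by
      rw [hfix' s a, hfix' s (β s)]
      simp only [sub_mul, Finset.sum_sub_distrib, mul_sub]
      ring
    rw [key, hGdef]
    refine (abs_add_le _ _).trans ?_
    have h1 : |r s a - r s (β s)| ≤ ℓ * επ :=
      (hLip s a (β s)).trans (mul_le_mul_of_nonneg_left (hεπ s a) hℓ)
    have h2 : |γ * ∑ s', (P s a s' - P s (β s) s') * V s'|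
        ≤ γ * (((Fintype.card S : ℝ) * εP) * (rmax / (1 - γ))) := by
      rw [abs_mul, abs_of_nonneg hγ0]
      refine mul_le_mul_of_nonneg_left ?_ hγ0
      refine dsum_abs_le' _ V _ _ (div_nonneg hrmax h1γ.le) ?_ hV0
      calc ∑ s', |P s a s' - P s (β s) s'| ≤ ∑ _s' : S, εP :=
            Finset.sum_le_sum (fun s' _ => hεP s a s')
        _ = (Fintype.card S : ℝ) * εP := by
            rw [Finset.sum_const, nsmul_eq_mul, Finset.card_univ]
    exact add_le_add h1 h2
  have hgapV : ∀ s (a : A), |Qβ s a - V s| ≤ G := by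
    intro s a; rw [hVβ]; exact hgap s a
  -- bound the one-step error D0
  obtain ⟨D0, hD0def⟩ : ∃ D0 : ℝ,
      D0 = εr + G + γ * (εPhat * (rmax / (1 - γ))) + |δ| := ⟨_, rfl⟩
  have hD0 : ∀ s a, |TILB P r γ Supp hSupp π Phat rhat δ Qβ s a - Qβ s a| ≤ D0 := by
    intro s a
    by_cases hmem : a ∈ Supp s
    · have key : TILB P r γ Supp hSupp π Phat rhat δ Qβ s a - Qβ s a
          = γ * ∑ s', P s a s' * (Qβ s' (π s') - V s') := by
        simp only [TILB, if_pos hmem]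
        rw [hfix' s a]
        simp only [mul_sub, Finset.sum_sub_distrib]
        ring
      rw [key]
      have h2 : |γ * ∑ s', P s a s' * (Qβ s' (π s') - V s')| ≤ γ * G := by
        rw [abs_mul, abs_of_nonneg hγ0]
        refine mul_le_mul_of_nonneg_left ?_ hγ0
        exact wsum_abs_le' (P s a) _ G (hP0 s a) (hP1 s a) (fun s' => hgapV s' (π s'))
      refine h2.trans ?_
      have hγG : γ * G ≤ G := by nlinarith
      have : 0 ≤ γ * (εPhat * (rmax / (1 - γ))) := by positivity
      rw [hD0def]
      have h3 : 0 ≤ γ * (εPhat * (rmax / (1 - γ))) := by positivity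
      have h4 := abs_nonneg δ
      linarith
    · simp only [TILB, if_neg hmem]
      have hbody : |min (yImg Phat rhat γ π Qβ s a) (yLmt Supp hSupp Qβ s) - Qβ s a|
          ≤ εr + G + γ * (εPhat * (rmax / (1 - γ))) := by
        have himg : |yImg Phat rhat γ π Qβ s a - Qβ s a|
            ≤ εr + G + γ * (εPhat * (rmax / (1 - γ))) := by
          have key : yImg Phat rhat γ π Qβ s a - Qβ s a
              = (rhat s a - r s a)
                + γ * ∑ s', Phat s a s' * (Qβ s' (π s') - V s')
                + γ * ∑ s', (Phat s a s' - P s a s') * V s' := by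
            simp only [yImg]
            rw [hfix' s a]
            simp only [mul_sub, sub_mul, Finset.sum_sub_distrib]
            ring
          rw [key]
          refine (abs_add_le _ _).trans ?_
          refine add_le_add ((abs_add_le _ _).trans (add_le_add (hεr s a) ?_)) ?_
          · rw [abs_mul, abs_of_nonneg hγ0]
            calc γ * |∑ s', Phat s a s' * (Qβ s' (π s') - V s')| ≤ γ * G :=
                  mul_le_mul_of_nonneg_left
                    (wsum_abs_le' (Phat s a) _ G (hPhat0 s a) (hPhat1 s a)
                      (fun s' => hgapV s' (π s'))) hγ0
              _ ≤ G := by nlinarith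
          · rw [abs_mul, abs_of_nonneg hγ0]
            refine mul_le_mul_of_nonneg_left ?_ hγ0
            exact dsum_abs_le' _ V _ _ (div_nonneg hrmax h1γ.le) (hεPhat s a) hV0
        have hlmt : |yLmt Supp hSupp Qβ s - Qβ s a|
            ≤ εr + G + γ * (εPhat * (rmax / (1 - γ))) := by
          have hyl : yLmt Supp hSupp Qβ s = V s := by simp only [yLmt, hVdef]
          have : |yLmt Supp hSupp Qβ s - Qβ s a| ≤ G := by
            rw [hyl, abs_sub_comm]
            exact hgapV s a
          have h3 : 0 ≤ γ * (εPhat * (rmax / (1 - γ))) := by positivity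
          linarith
        rcases le_total (yImg Phat rhat γ π Qβ s a) (yLmt Supp hSupp Qβ s) with h | h
        · rw [min_eq_left h]; exact himg
        · rw [min_eq_right h]; exact hlmt
      calc |min (yImg Phat rhat γ π Qβ s a) (yLmt Supp hSupp Qβ s) + δ - Qβ s a|
          ≤ |min (yImg Phat rhat γ π Qβ s a) (yLmt Supp hSupp Qβ s) - Qβ s a| + |δ| := by
            rw [add_sub_right_comm]; exact abs_add_le _ _
        _ ≤ D0 := by rw [hD0def]; linarith
  -- contraction step
  obtain ⟨N, hNdef⟩ : ∃ N : ℝ, N = supNorm (fun s a => QILB s a - Qβ s a) := ⟨_, rfl⟩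
  have hstep : N ≤ γ * N + D0 := by
    rw [hNdef]
    refine supNorm_le' _ _ (fun s a => ?_)
    have h1 : QILB s a = TILB P r γ Supp hSupp π Phat rhat δ QILB s a :=
      (congrFun (congrFun hILBfix s) a).symm
    calc |QILB s a - Qβ s a|
        = |(TILB P r γ Supp hSupp π Phat rhat δ QILB s a
            - TILB P r γ Supp hSupp π Phat rhat δ Qβ s a)
          + (TILB P r γ Supp hSupp π Phat rhat δ Qβ s a - Qβ s a)| := by
          rw [h1]; ring_nf
      _ ≤ |TILB P r γ Supp hSupp π Phat rhat δ QILB s a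
            - TILB P r γ Supp hSupp π Phat rhat δ Qβ s a|
          + |TILB P r γ Supp hSupp π Phat rhat δ Qβ s a - Qβ s a| := abs_add_le _ _
      _ ≤ γ * supNorm (fun s a => QILB s a - Qβ s a) + D0 := by
          refine add_le_add ?_ (hD0 s a)
          exact le_trans
            (le_supNorm' (fun s a => TILB P r γ Supp hSupp π Phat rhat δ QILB s a
              - TILB P r γ Supp hSupp π Phat rhat δ Qβ s a) s a)
            (hcontr QILB Qβ)
  have hN : N ≤ D0 / (1 - γ) := by
    rw [le_div_iff₀ h1γ]; nlinarith
  rw [hNdef] at hN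
  refine hN.trans (le_of_eq ?_)
  rw [hD0def, hGdef]
  field_simp
  ring
end
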